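/- arXiv:1211.6158 — 2 statements merged into one kernel-verified Lean document; each statement's English description precedes it below -/
import Mathlib

section
/- Combining the stability and forward-regret bounds for FTL: if each ℓ_t is α-strongly convex and L-Lipschitz on compact convex C and w_{t+1} = argmin_{w∈C} Σ_{τ=1}^t ℓ_τ(w), then the regret satisfies Σ_{t=1}^T [ℓ_t(w_t) − ℓ_t(w*)] ≤ (2L²/α)(1 + ln T), where w* = argmin_{w∈C} Σ_{t=1}^T ℓ_t(w). -/
/-!
By minimality of `w (t + 1)` for the cumulative loss `F t = ∑_{τ ≤ t} ℓ τ`, "be the leader"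
(`∑ ℓ t (w (t + 1)) ≤ ∑ ℓ t u`) bounds the regret against any `u ∈ C` by
`∑ (ℓ t (w t) - ℓ t (w (t + 1)))`. Since `F t = F (t - 1) + ℓ t` is `t α`-strongly convex,
quadratic growth at its minimiser `w (t + 1)` and minimality of `w t` for `F (t - 1)` give
`t α / 2 * ‖w t - w (t + 1)‖² ≤ ℓ t (w t) - ℓ t (w (t + 1)) ≤ L * ‖w t - w (t + 1)‖`,
so each term is at most `2 L² / (α t)`; the harmonic sum is at most `1 + log T`.
-/

open Finset Filter Topology

section StrongConvexity

variable {E : Type*} [NormedAddCommGroup E] [NormedSpace ℝ E] {s : Set E} {m : ℝ} {f : E → ℝ}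

lemma StrongConvexOn.add {n : ℝ} {g : E → ℝ} (hf : StrongConvexOn s m f)
    (hg : StrongConvexOn s n g) : StrongConvexOn s (m + n) (f + g) := by
  have := UniformConvexOn.add hf hg
  unfold StrongConvexOn
  convert this using 2 with r
  simp only [Pi.add_apply]
  ring

lemma StrongConvexOn.sum {ι : Type*} {t : Finset ι} {m : ι → ℝ} {f : ι → E → ℝ}
    (hs : Convex ℝ s) (hf : ∀ i ∈ t, StrongConvexOn s (m i) (f i)) :
    StrongConvexOn s (∑ i ∈ t, m i) (∑ i ∈ t, f i) := by
  classical
  induction t using Finset.induction_on with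
  | empty => exact strongConvexOn_zero.2 (convexOn_const 0 hs)
  | insert i t hi ih =>
    rw [sum_insert hi, sum_insert hi]
    exact (hf i (mem_insert_self i t)).add (ih fun j hj ↦ hf j (mem_insert_of_mem hj))

lemma StrongConvexOn.add_sq_le_of_isMinOn {x y : E} (hf : StrongConvexOn s m f)
    (hmin : IsMinOn f s x) (hx : x ∈ s) (hy : y ∈ s) :
    f x + m / 2 * ‖x - y‖ ^ 2 ≤ f y := by
  have hK : ∀ a ∈ Set.Ioc (0 : ℝ) 1, (1 - a) * (m / 2 * ‖x - y‖ ^ 2) ≤ f y - f x := by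
    rintro a ⟨ha₀, ha₁⟩
    have hcomb := hf.2 hx hy (sub_nonneg.2 ha₁) ha₀.le (sub_add_cancel 1 a)
    have hle := isMinOn_iff.1 hmin _ (hf.1 hx hy (sub_nonneg.2 ha₁) ha₀.le (sub_add_cancel 1 a))
    simp only [smul_eq_mul] at hcomb
    refine le_of_mul_le_mul_left ?_ ha₀
    linarith
  -- let the weight on `y` tend to `0`
  have hlim : Tendsto (fun a : ℝ ↦ (1 - a) * (m / 2 * ‖x - y‖ ^ 2)) (𝓝[>] 0)
      (𝓝 (m / 2 * ‖x - y‖ ^ 2)) := by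
    have : Continuous fun a : ℝ ↦ (1 - a) * (m / 2 * ‖x - y‖ ^ 2) := by fun_prop
    simpa using (this.tendsto 0).mono_left nhdsWithin_le_nhds
  have := le_of_tendsto hlim (mem_of_superset (Ioc_mem_nhdsGT one_pos) hK)
  linarith

lemma StrongConvexOn.sub_le_of_isMinOn_add {F g : E → ℝ} {L : ℝ} {x y : E} (hm : 0 < m)
    (hFg : StrongConvexOn s m (F + g)) (hFx : IsMinOn F s x) (hFgy : IsMinOn (F + g) s y)
    (hx : x ∈ s) (hy : y ∈ s) (hg : |g x - g y| ≤ L * ‖x - y‖) :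
    g x - g y ≤ 2 * L ^ 2 / m := by
  have hgrowth := hFg.add_sq_le_of_isMinOn hFgy hy hx
  have hFxy := isMinOn_iff.1 hFx y hy
  simp only [Pi.add_apply, norm_sub_rev y x] at hgrowth
  set r := ‖x - y‖
  have hquad : m / 2 * r ^ 2 ≤ L * r := by linarith [le_abs_self (g x - g y)]
  -- AM-GM: `m L r ≤ L² + m² r² / 4 ≤ L² + m L r / 2`
  have hLr : L * r ≤ 2 * L ^ 2 / m := by
    rw [le_div_iff₀ hm]
    nlinarith [sq_nonneg (L - m / 2 * r),
      mul_le_mul_of_nonneg_left hquad (by positivity : 0 ≤ m / 2)]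
  linarith [le_abs_self (g x - g y)]

end StrongConvexity

lemma sum_Icc_div_natCast_le {c : ℝ} (hc : 0 ≤ c) (n : ℕ) :
    ∑ t ∈ Icc 1 n, c / t ≤ c * (1 + Real.log n) := by
  simp_rw [div_eq_mul_inv, ← mul_sum]
  gcongr
  simpa [harmonic_eq_sum_Icc] using harmonic_le_one_add_log n

section FollowTheLeader

variable {E : Type*} {C : Set E} {ℓ : ℕ → E → ℝ} {w : ℕ → E}

lemma sum_le_sum_of_isMinOn_sum_Icc (hw : ∀ t, w t ∈ C)
    (hmin : ∀ t, IsMinOn (∑ τ ∈ Icc 1 t, ℓ τ) C (w (t + 1))) {u : E} (hu : u ∈ C) (n : ℕ) :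
    ∑ t ∈ Icc 1 n, ℓ t (w (t + 1)) ≤ ∑ t ∈ Icc 1 n, ℓ t u := by
  induction n generalizing u with
  | zero => simp
  | succ n ih =>
    have hleader := isMinOn_iff.1 (hmin (n + 1)) u hu
    simp only [Finset.sum_apply] at hleader
    rw [sum_Icc_succ_top (by omega)] at hleader ⊢
    linarith [ih (hw (n + 1 + 1))]

lemma ftl_stability [NormedAddCommGroup E] [NormedSpace ℝ E] {α L : ℝ} (hα : 0 < α)
    (hsc : ∀ τ, StrongConvexOn C α (ℓ τ))
    (hlip : ∀ τ, ∀ x ∈ C, ∀ y ∈ C, |ℓ τ x - ℓ τ y| ≤ L * ‖x - y‖) (hw : ∀ t, w t ∈ C)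
    (hmin : ∀ t, IsMinOn (∑ τ ∈ Icc 1 t, ℓ τ) C (w (t + 1))) {t : ℕ} (ht : 1 ≤ t) :
    ℓ t (w t) - ℓ t (w (t + 1)) ≤ 2 * L ^ 2 / α / t := by
  obtain ⟨s, rfl⟩ : ∃ s, t = s + 1 := ⟨t - 1, by omega⟩
  have hsplit : ∑ τ ∈ Icc 1 (s + 1), ℓ τ = ∑ τ ∈ Icc 1 s, ℓ τ + ℓ (s + 1) :=
    sum_Icc_succ_top (by omega) _
  have hsc_sum : StrongConvexOn C ((s + 1 : ℕ) * α) (∑ τ ∈ Icc 1 (s + 1), ℓ τ) := by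
    simpa using StrongConvexOn.sum (t := Icc 1 (s + 1)) (hsc 0).1 fun τ _ ↦ hsc τ
  rw [hsplit] at hsc_sum
  have hmin_succ := hmin (s + 1)
  rw [hsplit] at hmin_succ
  have := hsc_sum.sub_le_of_isMinOn_add (by positivity) (hmin s) hmin_succ (hw _) (hw _)
    (hlip _ _ (hw _) _ (hw _))
  rwa [div_mul_eq_div_div_swap] at this

end FollowTheLeader

theorem stmt_6_general {d : ℕ} (C : Set (EuclideanSpace ℝ (Fin d)))
    (α L : ℝ) (hα : 0 < α) (T : ℕ)
    (ℓ : ℕ → EuclideanSpace ℝ (Fin d) → ℝ)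
    (hsc : ∀ τ, StrongConvexOn C α (ℓ τ))
    (hlip : ∀ τ, ∀ x ∈ C, ∀ y ∈ C, |ℓ τ x - ℓ τ y| ≤ L * ‖x - y‖)
    (w : ℕ → EuclideanSpace ℝ (Fin d)) (hw : ∀ t, w t ∈ C)
    (hmin : ∀ t, 1 ≤ t →
      ∀ u ∈ C, ∑ τ ∈ Finset.Icc 1 t, ℓ τ (w (t + 1)) ≤ ∑ τ ∈ Finset.Icc 1 t, ℓ τ u)
    (wstar : EuclideanSpace ℝ (Fin d)) (hwstar : wstar ∈ C) :
    ∑ t ∈ Finset.Icc 1 T, (ℓ t (w t) - ℓ t wstar) ≤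
      2 * L ^ 2 / α * (1 + Real.log T) := by
  have hleader : ∀ t, IsMinOn (∑ τ ∈ Icc 1 t, ℓ τ) C (w (t + 1)) := by
    rintro (_ | t)
    · exact isMinOn_iff.2 fun _ _ ↦ by simp
    · exact isMinOn_iff.2 fun u hu ↦ by
        simpa only [Finset.sum_apply] using hmin (t + 1) (by omega) u hu
  calc ∑ t ∈ Icc 1 T, (ℓ t (w t) - ℓ t wstar)
      ≤ ∑ t ∈ Icc 1 T, (ℓ t (w t) - ℓ t (w (t + 1))) := by
        simp only [sum_sub_distrib]
        linarith [sum_le_sum_of_isMinOn_sum_Icc hw hleader hwstar T]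
    _ ≤ ∑ t ∈ Icc 1 T, 2 * L ^ 2 / α / t :=
        sum_le_sum fun t ht ↦ ftl_stability hα hsc hlip hw hleader (mem_Icc.1 ht).1
    _ ≤ 2 * L ^ 2 / α * (1 + Real.log T) := sum_Icc_div_natCast_le (by positivity) T

/-- FTL regret bound: for α-strongly convex, L-Lipschitz losses, the FTL regret is at most
(2L²/α)(1 + ln T). -/
theorem stmt_6 {d : ℕ} (C : Set (EuclideanSpace ℝ (Fin d)))
    (hC : Convex ℝ C) (hCcpt : IsCompact C)
    (α L : ℝ) (hα : 0 < α) (hL : 0 ≤ L) (T : ℕ) (hT : 1 ≤ T)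
    (ℓ : ℕ → EuclideanSpace ℝ (Fin d) → ℝ)
    (hsc : ∀ τ, StrongConvexOn C α (ℓ τ))
    (hlip : ∀ τ, ∀ x ∈ C, ∀ y ∈ C, |ℓ τ x - ℓ τ y| ≤ L * ‖x - y‖)
    (w : ℕ → EuclideanSpace ℝ (Fin d)) (hw : ∀ t, w t ∈ C)
    (hmin : ∀ t, 1 ≤ t →
      ∀ u ∈ C, ∑ τ ∈ Finset.Icc 1 t, ℓ τ (w (t + 1)) ≤ ∑ τ ∈ Finset.Icc 1 t, ℓ τ u)
    (wstar : EuclideanSpace ℝ (Fin d)) (hwstar : wstar ∈ C)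
    (hstar : ∀ u ∈ C, ∑ t ∈ Finset.Icc 1 T, ℓ t wstar ≤ ∑ t ∈ Finset.Icc 1 T, ℓ t u) :
    ∑ t ∈ Finset.Icc 1 T, (ℓ t (w t) - ℓ t wstar) ≤
      2 * L ^ 2 / α * (1 + Real.log T) :=
  stmt_6_general C α L hα T ℓ hsc hlip w hw hmin wstar hwstar
end

section
/- Approximate IOL one-step progress bound: with f_t(w) = η ℓ_t(w) + (1/2)‖w − w_t‖₂², exact minimizer w*_{t+1} over C, approximate iterate w_{t+1} with f_t(w_{t+1}) ≤ f_t(w*_{t+1}) + δ_t, and diameter D of C, one has η ℓ_t(w_{t+1}) ≤ η ℓ_t(w*) + (1/2)[‖w* − w_t‖² − ‖w* − w_{t+1}‖²] + δ_t + D√(2δ_t) for every w* ∈ C. -/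
/-!
The proximal objective `F u = η ℓ u + ½‖u - w_t‖²` is `1`-strongly convex, so its minimiser
`w*_{t+1}` over `C` satisfies the quadratic growth bound `F w*_{t+1} + ½‖u - w*_{t+1}‖² ≤ F u`.
At `u = w_{t+1}` this gives `‖w_{t+1} - w*_{t+1}‖ ≤ √(2δ)`; at `u = w*` it gives the exact
one-step bound with `w*_{t+1}` in place of `w_{t+1}`, and replacing one by the other costs `δ`
in the objective and at most `D √(2δ)` in `½‖w* - ·‖²`.
-/

open Filter Topology

variable {E : Type*}

theorem StrongConvexOn.add_sq_norm_sub_le_of_isMinOn [NormedAddCommGroup E] [NormedSpace ℝ E]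
    {s : Set E} {m : ℝ} {f : E → ℝ} {x y : E} (hf : StrongConvexOn s m f) (hmin : IsMinOn f s x)
    (hx : x ∈ s) (hy : y ∈ s) :
    f x + m / 2 * ‖y - x‖ ^ 2 ≤ f y := by
  -- Compare `x` with the points `(1 - t) • x + t • y` of the segment and let `t → 0⁺`.
  have hsegment : ∀ t ∈ Set.Ioc (0 : ℝ) 1, f x + (1 - t) * (m / 2 * ‖y - x‖ ^ 2) ≤ f y := by
    rintro t ⟨ht0, ht1⟩
    have hconv := hf.2 hx hy (sub_nonneg.2 ht1) ht0.le (sub_add_cancel 1 t)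
    have hmin_t := isMinOn_iff.1 hmin _ (hf.1 hx hy (sub_nonneg.2 ht1) ht0.le (sub_add_cancel 1 t))
    rw [norm_sub_rev] at hconv
    simp only [smul_eq_mul] at hconv
    refine le_of_mul_le_mul_left ?_ ht0
    linarith
  have hcont : Continuous fun t : ℝ ↦ f x + (1 - t) * (m / 2 * ‖y - x‖ ^ 2) := by fun_prop
  have hlim : Tendsto (fun t : ℝ ↦ f x + (1 - t) * (m / 2 * ‖y - x‖ ^ 2)) (𝓝[>] 0)
      (𝓝 (f x + m / 2 * ‖y - x‖ ^ 2)) := by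
    simpa using (hcont.tendsto 0).mono_left nhdsWithin_le_nhds
  refine le_of_tendsto hlim ?_
  filter_upwards [Ioc_mem_nhdsGT zero_lt_one] with t ht using hsegment t ht

theorem ConvexOn.strongConvexOn_add_sq_norm_sub [NormedAddCommGroup E] [InnerProductSpace ℝ E]
    {s : Set E} {g : E → ℝ} (hg : ConvexOn ℝ s g) (a : E) :
    StrongConvexOn s 1 fun u ↦ g u + 1 / 2 * ‖u - a‖ ^ 2 := by
  rw [strongConvexOn_iff_convex]
  refine ((hg.sub ((innerₛₗ ℝ a).concaveOn hg.1)).add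
    (convexOn_const (1 / 2 * ‖a‖ ^ 2) hg.1)).congr fun u _ ↦ ?_
  simp only [Pi.add_apply, Pi.sub_apply, innerₛₗ_apply_apply, norm_sub_sq_real,
    real_inner_comm a u]
  ring

theorem sq_norm_sub_sub_sq_norm_sub_le [SeminormedAddCommGroup E] {x y z : E} {D : ℝ}
    (hx : ‖z - x‖ ≤ D) (hy : ‖z - y‖ ≤ D) :
    ‖z - x‖ ^ 2 - ‖z - y‖ ^ 2 ≤ 2 * D * ‖x - y‖ := by
  have hdiff : ‖z - x‖ - ‖z - y‖ ≤ ‖x - y‖ := by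
    simpa [norm_sub_rev y x] using norm_sub_norm_le (z - x) (z - y)
  nlinarith [norm_nonneg (z - x), norm_nonneg (z - y), norm_nonneg (x - y)]

theorem stmt_16_general {d : ℕ} (C : Set (EuclideanSpace ℝ (Fin d)))
    (η δ D : ℝ) (hη : 0 < η)
    (hD : ∀ x ∈ C, ∀ y ∈ C, ‖x - y‖ ≤ D)
    (ℓ : EuclideanSpace ℝ (Fin d) → ℝ)
    (hconv : ConvexOn ℝ C ℓ)
    (wt wex w1 : EuclideanSpace ℝ (Fin d))
    (hwex : wex ∈ C) (hw1 : w1 ∈ C)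
    (hmin : ∀ u ∈ C,
      η * ℓ wex + 1 / 2 * ‖wex - wt‖ ^ 2 ≤ η * ℓ u + 1 / 2 * ‖u - wt‖ ^ 2)
    (happrox : η * ℓ w1 + 1 / 2 * ‖w1 - wt‖ ^ 2 ≤
      η * ℓ wex + 1 / 2 * ‖wex - wt‖ ^ 2 + δ) :
    ∀ wstar ∈ C,
      η * ℓ w1 ≤ η * ℓ wstar +
        1 / 2 * (‖wstar - wt‖ ^ 2 - ‖wstar - w1‖ ^ 2) + δ + D * Real.sqrt (2 * δ) := by
  intro wstar hwstar
  have hstrong : StrongConvexOn C 1 fun u ↦ η * ℓ u + 1 / 2 * ‖u - wt‖ ^ 2 :=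
    (hconv.smul hη.le).strongConvexOn_add_sq_norm_sub wt
  have hgrowth := fun u (hu : u ∈ C) ↦
    hstrong.add_sq_norm_sub_le_of_isMinOn (isMinOn_iff.2 hmin) hwex hu
  have hclose : ‖w1 - wex‖ ≤ Real.sqrt (2 * δ) := by
    refine Real.le_sqrt_of_sq_le ?_
    linarith [hgrowth w1 hw1]
  have hshift : ‖wstar - w1‖ ^ 2 - ‖wstar - wex‖ ^ 2 ≤ 2 * D * Real.sqrt (2 * δ) := by
    have hD0 : 0 ≤ D := (norm_nonneg _).trans (hD _ hwstar _ hwstar)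
    calc ‖wstar - w1‖ ^ 2 - ‖wstar - wex‖ ^ 2
        ≤ 2 * D * ‖w1 - wex‖ :=
          sq_norm_sub_sub_sq_norm_sub_le (hD _ hwstar _ hw1) (hD _ hwstar _ hwex)
      _ ≤ 2 * D * Real.sqrt (2 * δ) := by gcongr
  linarith [hgrowth wstar hwstar, sq_nonneg ‖w1 - wt‖]

/-- Approximate IOL one-step progress bound. -/
theorem stmt_16 {d : ℕ} (C : Set (EuclideanSpace ℝ (Fin d)))
    (hC : Convex ℝ C) (hCcpt : IsCompact C)
    (η δ D : ℝ) (hη : 0 < η) (hδ : 0 ≤ δ)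
    (hD : ∀ x ∈ C, ∀ y ∈ C, ‖x - y‖ ≤ D)
    (ℓ : EuclideanSpace ℝ (Fin d) → ℝ)
    (hconv : ConvexOn ℝ C ℓ)
    (wt wex w1 : EuclideanSpace ℝ (Fin d))
    (hwt : wt ∈ C) (hwex : wex ∈ C) (hw1 : w1 ∈ C)
    (hmin : ∀ u ∈ C,
      η * ℓ wex + 1 / 2 * ‖wex - wt‖ ^ 2 ≤ η * ℓ u + 1 / 2 * ‖u - wt‖ ^ 2)
    (happrox : η * ℓ w1 + 1 / 2 * ‖w1 - wt‖ ^ 2 ≤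
      η * ℓ wex + 1 / 2 * ‖wex - wt‖ ^ 2 + δ) :
    ∀ wstar ∈ C,
      η * ℓ w1 ≤ η * ℓ wstar +
        1 / 2 * (‖wstar - wt‖ ^ 2 - ‖wstar - w1‖ ^ 2) + δ + D * Real.sqrt (2 * δ) :=
  stmt_16_general C η δ D hη hD ℓ hconv wt wex w1 hwex hw1 hmin happrox
end
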